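/- Let d ≥ 1 and let Q₁ ⊆ Q₂ ⊆ Q₃ ⊆ … be an increasing sequence of axis-parallel cubes in ℝ^d, and let Q_∞ = ⋃_n Q_n. Let f be a nonnegative measurable function on Q_∞ with f ∈ L¹(Q_n) for every n, ∫_{Q₁} f < ∞, and var_{interior(Q_∞)} f < ∞. Then limsup_{n→∞} f_{Q_n} < ∞. -/

import Mathlib

open MeasureTheory Metric Set Filter
open scoped ENNReal Topology

noncomputable section

/-- `ℝ^d` as Euclidean space. -/
abbrev Ed (d : ℕ) := EuclideanSpace ℝ (Fin d)

/-- An axis-parallel cube `∏_i [a_i, a_i + l]` with positive side length `l`. -/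
def IsCube {d : ℕ} (Q : Set (Ed d)) : Prop :=
  ∃ (a : Ed d) (l : ℝ), 0 < l ∧ Q = {x : Ed d | ∀ i, x i ∈ Set.Icc (a i) (a i + l)}

/-- Divergence of a vector field `φ : ℝ^d → ℝ^d`. -/
def divergence {d : ℕ} (φ : Ed d → Ed d) (x : Ed d) : ℝ :=
  ∑ i, fderiv ℝ φ x (EuclideanSpace.single i 1) i

/-- The variation of `f` in `Ω`. -/
def var {d : ℕ} (Ω : Set (Ed d)) (f : Ed d → ℝ) : ℝ≥0∞ :=
  ⨆ φ ∈ {φ : Ed d → Ed d | ContDiff ℝ 1 φ ∧ HasCompactSupport φ ∧ tsupport φ ⊆ Ω ∧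
      ∀ x, ‖φ x‖ ≤ 1},
    ENNReal.ofReal (∫ x in Ω, f x * divergence φ x)


/-! For cubes `R ⊇ P` with sides `L ≥ l`, take one-dimensional bumps `aᵢ`, `bᵢ` of unit mass,
`aᵢ` spread over the `i`-th side of `R` (shrunk by `δ`) and `bᵢ` concentrated on that of `P`, and
put `Pa x = ∏ aᵢ(xᵢ)`, `Pb x = ∏ bᵢ(xᵢ)`. With `Hᵢ` the primitive of `aᵢ - bᵢ` (bounded by `1`,
and compactly supported because the masses agree), the field
`φᵢ(x) = Hᵢ(xᵢ) ∏_{j<i} bⱼ(xⱼ) ∏_{j>i} aⱼ(xⱼ)` has telescoping divergence `Pa - Pb` and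
`‖φ‖ ≤ √d (2/l)^(d-1)`. Testing the variation of `f ≥ 0` against `φ` gives
`L⁻ᵈ ∫_{R_δ} f ≤ ∫ f Pa ≤ √d (2/l)^(d-1) var f + (2/l)^d ∫_P f`; letting `δ → 0` bounds the
average of `f` over each `Qₙ` by a constant that only depends on `Q₀`. -/

section Box

variable {d : ℕ}

def box (a b : Fin d → ℝ) : Set (Ed d) := WithLp.ofLp ⁻¹' Icc a b

def openBox (a b : Fin d → ℝ) : Set (Ed d) := WithLp.ofLp ⁻¹' univ.pi fun i => Ioo (a i) (b i)

@[simp]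
lemma mem_box {a b : Fin d → ℝ} {x : Ed d} : x ∈ box a b ↔ ∀ i, x i ∈ Icc (a i) (b i) := by
  simp [box, Pi.le_def, forall_and]

@[simp]
lemma mem_openBox {a b : Fin d → ℝ} {x : Ed d} :
    x ∈ openBox a b ↔ ∀ i, x i ∈ Ioo (a i) (b i) := by
  simp [openBox]

lemma isCompact_box (a b : Fin d → ℝ) : IsCompact (box a b) :=
  (PiLp.continuousLinearEquiv 2 ℝ _).toHomeomorph.isCompact_preimage.2 isCompact_Icc

lemma isOpen_openBox (a b : Fin d → ℝ) : IsOpen (openBox a b) :=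
  (isOpen_set_pi finite_univ fun _ _ => isOpen_Ioo).preimage (PiLp.continuous_ofLp 2 _)

lemma measurableSet_box (a b : Fin d → ℝ) : MeasurableSet (box a b) :=
  (isCompact_box a b).isClosed.measurableSet

lemma box_subset_box {a b c e : Fin d → ℝ} (hca : c ≤ a) (hbe : b ≤ e) : box a b ⊆ box c e :=
  preimage_mono (Icc_subset_Icc hca hbe)

lemma box_subset_box_iff {a b c e : Fin d → ℝ} (hab : a ≤ b) :
    box a b ⊆ box c e ↔ c ≤ a ∧ b ≤ e := by
  rw [box, box, (WithLp.ofLp_surjective 2).preimage_subset_preimage_iff, Icc_subset_Icc_iff hab]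

lemma openBox_subset_box (a b : Fin d → ℝ) : openBox a b ⊆ box a b := fun _ hx =>
  mem_box.2 fun i => Ioo_subset_Icc_self (mem_openBox.1 hx i)

lemma box_subset_openBox {a b c e : Fin d → ℝ} (hca : ∀ i, c i < a i) (hbe : ∀ i, b i < e i) :
    box a b ⊆ openBox c e := fun _ hx => mem_openBox.2 fun i =>
  ⟨(hca i).trans_le (mem_box.1 hx i).1, (mem_box.1 hx i).2.trans_lt (hbe i)⟩

lemma iUnion_box_eq_openBox {a b : Fin d → ℝ} {δ : ℕ → ℝ} (hδ0 : ∀ k, 0 < δ k)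
    (hδ : Tendsto δ atTop (𝓝 0)) :
    ⋃ k, box (fun i => a i + δ k) (fun i => b i - δ k) = openBox a b := by
  refine Subset.antisymm (iUnion_subset fun k =>
    box_subset_openBox (fun i => by linarith [hδ0 k]) fun i => by linarith [hδ0 k]) fun x hx => ?_
  have hev : ∀ᶠ k in atTop, ∀ i, x i ∈ Icc (a i + δ k) (b i - δ k) :=
    eventually_all.2 fun i => by
      obtain ⟨h1, h2⟩ := mem_openBox.1 hx i
      filter_upwards [(tendsto_order.1 hδ).2 _ (lt_min (sub_pos.2 h1) (sub_pos.2 h2))] with k hk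
      constructor <;> linarith [min_le_left (x i - a i) (b i - x i),
        min_le_right (x i - a i) (b i - x i)]
  obtain ⟨k, hk⟩ := hev.exists
  exact mem_iUnion.2 ⟨k, mem_box.2 hk⟩

lemma openBox_ae_eq_box (a b : Fin d → ℝ) : openBox a b =ᵐ[volume] box a b :=
  (PiLp.volume_preserving_ofLp (ι := Fin d)).quasiMeasurePreserving.preimage_ae_eq
    Measure.univ_pi_Ioo_ae_eq_Icc

lemma volume_box (a b : Fin d → ℝ) : volume (box a b) = ∏ i, ENNReal.ofReal (b i - a i) := by
  rw [box, (PiLp.volume_preserving_ofLp (ι := Fin d)).measure_preimage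
    measurableSet_Icc.nullMeasurableSet, Real.volume_Icc_pi]

lemma IntegrableOn.mul_prod_box {a b : Fin d → ℝ} {f : Ed d → ℝ} {g : Fin d → ℝ → ℝ}
    (hf : IntegrableOn f (box a b)) (hg : ∀ i, Continuous (g i)) :
    IntegrableOn (fun x => f x * ∏ i, g i (x i)) (box a b) :=
  hf.mul_continuousOn (continuous_finsetProd _ fun i _ =>
    (hg i).comp (PiLp.continuous_apply 2 _ i)).continuousOn (isCompact_box a b)

lemma IsCube.exists_eq_box {Q : Set (Ed d)} (hQ : IsCube Q) :
    ∃ (a : Fin d → ℝ) (L : ℝ), 0 < L ∧ Q = box a (fun i => a i + L) := by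
  obtain ⟨a, L, hL, rfl⟩ := hQ
  exact ⟨a, L, hL, by ext; simp⟩

end Box

structure IsUnitBump (a : ℝ → ℝ) (m M : ℝ) : Prop where
  contDiff : ContDiff ℝ 1 a
  nonneg : ∀ t, 0 ≤ a t
  integral_eq_one : ∫ t, a t = 1
  support_subset : Function.support a ⊆ Ioo m M

namespace IsUnitBump

variable {a : ℝ → ℝ} {m M : ℝ}

lemma continuous (ha : IsUnitBump a m M) : Continuous a := ha.contDiff.continuous

lemma eq_zero (ha : IsUnitBump a m M) {t : ℝ} (ht : t ∉ Ioo m M) : a t = 0 :=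
  Function.notMem_support.1 fun h => ht (ha.support_subset h)

lemma integrable (ha : IsUnitBump a m M) : Integrable a :=
  ha.continuous.integrable_of_hasCompactSupport <| HasCompactSupport.intro isCompact_Icc
    fun _ ht => ha.eq_zero fun h => ht (Ioo_subset_Icc_self h)

lemma mono (ha : IsUnitBump a m M) {m' M' : ℝ} (hm : m' ≤ m) (hM : M ≤ M') :
    IsUnitBump a m' M' :=
  ⟨ha.contDiff, ha.nonneg, ha.integral_eq_one, ha.support_subset.trans (Ioo_subset_Ioo hm hM)⟩

lemma lt (ha : IsUnitBump a m M) : m < M := by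
  by_contra h
  have : a = 0 := funext fun t => ha.eq_zero (by simp [Ioo_eq_empty h])
  simpa [this] using ha.integral_eq_one

lemma setIntegral_Ioc_mem_Icc (ha : IsUnitBump a m M) (u v : ℝ) :
    ∫ t in Ioc u v, a t ∈ Icc (0 : ℝ) 1 :=
  ⟨setIntegral_nonneg measurableSet_Ioc fun t _ => ha.nonneg t,
    ha.integral_eq_one ▸ setIntegral_le_integral ha.integrable (.of_forall ha.nonneg)⟩

lemma intervalIntegral_eq_one (ha : IsUnitBump a m M) {x : ℝ} (hx : M ≤ x) :
    ∫ t in m..x, a t = 1 := by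
  rw [intervalIntegral.integral_of_le (ha.lt.le.trans hx),
    setIntegral_eq_integral_of_forall_compl_eq_zero fun t ht =>
      ha.eq_zero fun h => ht (Ioo_subset_Ioc_self ⟨h.1, h.2.trans_le hx⟩),
    ha.integral_eq_one]

lemma prod_eq_zero {d : ℕ} {a : Fin d → ℝ → ℝ} {m M : Fin d → ℝ}
    (ha : ∀ i, IsUnitBump (a i) (m i) (M i)) {y : Ed d} (hy : y ∉ openBox m M) :
    ∏ i, a i (y i) = 0 := by
  obtain ⟨j, hj⟩ : ∃ j, y j ∉ Ioo (m j) (M j) := by simpa using hy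
  exact Finset.prod_eq_zero (Finset.mem_univ j) ((ha j).eq_zero hj)

end IsUnitBump

lemma exists_isUnitBump (α L δ : ℝ) (hδ : 0 < δ) (hδL : δ ≤ L / 4) :
    ∃ a, IsUnitBump a (α + δ / 2) (α + L - δ / 2) ∧ (∀ t, a t ≤ 2 / L) ∧
      ∀ t ∈ Icc (α + δ) (α + L - δ), 1 / L ≤ a t := by
  let ψ : ContDiffBump (α + L / 2) := ⟨L / 2 - δ, L / 2 - δ / 2, by linarith, by linarith⟩
  have hrIn : ψ.rIn = L / 2 - δ := rfl
  have hrOut : ψ.rOut = L / 2 - δ / 2 := rfl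
  refine ⟨ψ.normed volume, ⟨ψ.contDiff_normed, ψ.nonneg_normed, ψ.integral_normed, ?_⟩,
    fun t => ?_, fun t ht => ?_⟩
  · rw [ψ.support_normed_eq, Real.ball_eq_Ioo, hrOut]
    exact Ioo_subset_Ioo (by linarith) (by linarith)
  · calc ψ.normed volume t ≤ 1 / volume.real (closedBall (α + L / 2) ψ.rIn) :=
          ψ.normed_le_div_measure_closedBall_rIn volume t
      _ = 1 / (L - 2 * δ) := by
          rw [Real.volume_real_closedBall (by rw [hrIn]; linarith), hrIn]
          ring_nf
      _ ≤ 2 / L := by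
          rw [div_le_div_iff₀ (by linarith) (by linarith)]
          linarith
  · have hψt : ψ t = 1 := ψ.one_of_mem_closedBall (by
      rw [Real.closedBall_eq_Icc, hrIn]
      constructor <;> linarith [ht.1, ht.2])
    have hint : ∫ s, ψ s ≤ L :=
      calc ∫ s, ψ s ≤ volume.real (closedBall (α + L / 2) ψ.rOut) :=
            ψ.integral_le_measure_closedBall volume
        _ ≤ L := by
            rw [Real.volume_real_closedBall (by rw [hrOut]; linarith), hrOut]
            linarith
    rw [ψ.normed_def, hψt]
    exact one_div_le_one_div_of_le ψ.integral_pos hint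

def flux (a b : ℝ → ℝ) (m x : ℝ) : ℝ := ∫ t in m..x, (a t - b t)

section Flux

variable {a b : ℝ → ℝ} {m M : ℝ}

lemma hasDerivAt_flux (ha : Continuous a) (hb : Continuous b) (x : ℝ) :
    HasDerivAt (flux a b m) (a x - b x) x :=
  ((ha.sub hb).integral_hasStrictDerivAt m x).hasDerivAt

lemma contDiff_flux (ha : Continuous a) (hb : Continuous b) : ContDiff ℝ 1 (flux a b m) := by
  refine contDiff_one_iff_deriv.2 ⟨fun x => (hasDerivAt_flux ha hb x).differentiableAt, ?_⟩
  rw [show deriv (flux a b m) = fun x => a x - b x from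
    funext fun x => (hasDerivAt_flux ha hb x).deriv]
  exact ha.sub hb

lemma flux_eq_sub (ha : IsUnitBump a m M) (hb : IsUnitBump b m M) (x : ℝ) :
    flux a b m x = (∫ t in m..x, a t) - ∫ t in m..x, b t :=
  intervalIntegral.integral_sub ha.integrable.intervalIntegrable hb.integrable.intervalIntegrable

lemma flux_eq_zero (ha : IsUnitBump a m M) (hb : IsUnitBump b m M) {x : ℝ} (hx : x ∉ Ioo m M) :
    flux a b m x = 0 := by
  rcases le_or_gt x m with hxm | hmx
  · refine (intervalIntegral.integral_congr fun t ht => ?_).trans intervalIntegral.integral_zero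
    rw [uIcc_of_ge hxm] at ht
    have hnot : t ∉ Ioo m M := fun h => (h.1.trans_le ht.2).false
    simp [ha.eq_zero hnot, hb.eq_zero hnot]
  · have hMx : M ≤ x := le_of_not_gt fun h => hx ⟨hmx, h⟩
    rw [flux_eq_sub ha hb, ha.intervalIntegral_eq_one hMx, hb.intervalIntegral_eq_one hMx, sub_self]

lemma abs_flux_le_one (ha : IsUnitBump a m M) (hb : IsUnitBump b m M) (x : ℝ) :
    |flux a b m x| ≤ 1 := by
  rcases le_or_gt x m with hxm | hmx
  · rw [flux_eq_zero ha hb fun h => (h.1.trans_le hxm).false, abs_zero]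
    exact zero_le_one
  · rw [flux_eq_sub ha hb, intervalIntegral.integral_of_le hmx.le,
      intervalIntegral.integral_of_le hmx.le, abs_sub_le_iff]
    obtain ⟨ha0, ha1⟩ := ha.setIntegral_Ioc_mem_Icc m x
    obtain ⟨hb0, hb1⟩ := hb.setIntegral_Ioc_mem_Icc m x
    constructor <;> linarith

end Flux

lemma divergence_eq_sum_fderiv {d : ℕ} {φ : Ed d → Ed d} {x : Ed d}
    (hφ : DifferentiableAt ℝ φ x) :
    divergence φ x = ∑ i, fderiv ℝ (fun y => φ y i) x (EuclideanSpace.single i 1) :=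
  Finset.sum_congr rfl fun i _ => by
    rw [show (fun y => φ y i) = EuclideanSpace.proj i ∘ φ from rfl,
      ((EuclideanSpace.proj i).hasFDerivAt.comp x hφ.hasFDerivAt).fderiv]
    rfl

lemma norm_le_sqrt_mul_of_forall_abs_le {d : ℕ} {x : Ed d} {c : ℝ} (hc : 0 ≤ c)
    (h : ∀ i, |x i| ≤ c) : ‖x‖ ≤ √d * c := by
  rw [EuclideanSpace.norm_eq]
  calc √(∑ i, ‖x i‖ ^ 2) ≤ √(∑ _i : Fin d, c ^ 2) := by
        gcongr with i
        exact h i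
    _ = √d * c := by simp [Real.sqrt_mul, Real.sqrt_sq hc]

lemma integral_mul_divergence_le {d : ℕ} {Ω : Set (Ed d)} {f : Ed d → ℝ} {ψ : Ed d → Ed d}
    {c : ℝ} (hψ : ContDiff ℝ 1 ψ) (hcs : HasCompactSupport ψ) (hΩ : tsupport ψ ⊆ Ω)
    (hψc : ∀ x, ‖ψ x‖ ≤ c) (hvar : var Ω f ≠ ∞) :
    ∫ x in Ω, f x * divergence ψ x ≤ c * (var Ω f).toReal := by
  rcases ((norm_nonneg _).trans (hψc 0)).eq_or_lt with rfl | hc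
  · obtain rfl : ψ = 0 := funext fun x => norm_le_zero_iff.1 (hψc x)
    simp [divergence]
  have hle : ENNReal.ofReal (∫ x in Ω, f x * divergence (c⁻¹ • ψ) x) ≤ var Ω f := by
    refine le_iSup₂_of_le (c⁻¹ • ψ) ⟨hψ.const_smul c⁻¹, hcs.smul_left (f := fun _ => c⁻¹),
      (tsupport_smul_subset_right (fun _ => c⁻¹) ψ).trans hΩ, fun x => ?_⟩ le_rfl
    rw [Pi.smul_apply, norm_smul, Real.norm_of_nonneg (inv_nonneg.2 hc.le)]
    exact inv_mul_le_one_of_le₀ (hψc x) hc.le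
  have hdiv : ∀ x, divergence (c⁻¹ • ψ) x = c⁻¹ * divergence ψ x := fun x => by
    simp [divergence, fderiv_const_smul_field, Finset.mul_sum]
  rw [ENNReal.ofReal_le_iff_le_toReal hvar] at hle
  simp_rw [hdiv, mul_left_comm (f _), integral_const_mul] at hle
  rwa [inv_mul_le_iff₀ hc] at hle

def fluxField {d : ℕ} (a b : Fin d → ℝ → ℝ) (m : Fin d → ℝ) (y : Ed d) : Ed d :=
  WithLp.toLp 2 fun i => flux (a i) (b i) (m i) (y i) *
    (∏ j ∈ Finset.Iio i, b j (y j)) * ∏ j ∈ Finset.Ioi i, a j (y j)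

section FluxField

variable {d : ℕ} {a b : Fin d → ℝ → ℝ} {m M : Fin d → ℝ}

lemma contDiff_fluxField (ha : ∀ i, ContDiff ℝ 1 (a i)) (hb : ∀ i, ContDiff ℝ 1 (b i)) :
    ContDiff ℝ 1 (fluxField a b m) :=
  (contDiff_piLp 2).2 fun i =>
    (((contDiff_flux (ha i).continuous (hb i).continuous).comp (contDiff_piLp_apply 2)).mul
      (contDiff_prod fun j _ => (hb j).comp (contDiff_piLp_apply 2))).mul
      (contDiff_prod fun j _ => (ha j).comp (contDiff_piLp_apply 2))

lemma fderiv_fluxField_apply_single (ha : ∀ i, ContDiff ℝ 1 (a i))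
    (hb : ∀ i, ContDiff ℝ 1 (b i)) (x : Ed d) (i : Fin d) :
    fderiv ℝ (fun y => fluxField a b m y i) x (EuclideanSpace.single i 1) =
      (a i (x i) - b i (x i)) * (∏ j ∈ Finset.Iio i, b j (x j)) *
        ∏ j ∈ Finset.Ioi i, a j (x j) := by
  have hline : (fun t : ℝ => fluxField a b m (x + t • EuclideanSpace.single i 1) i) =
      fun t => flux (a i) (b i) (m i) (x i + t) *
        (∏ j ∈ Finset.Iio i, b j (x j)) * ∏ j ∈ Finset.Ioi i, a j (x j) := by
    funext t
    simp only [fluxField, PiLp.add_apply, PiLp.smul_apply, PiLp.single_apply, if_true,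
      smul_eq_mul, mul_one]
    congr 1
    · congr 1
      exact Finset.prod_congr rfl fun j hj => by simp [(Finset.mem_Iio.1 hj).ne]
    · exact Finset.prod_congr rfl fun j hj => by simp [(Finset.mem_Ioi.1 hj).ne']
  rw [← (((contDiff_piLp 2).1 (contDiff_fluxField ha hb) i).differentiable one_ne_zero
    x).lineDeriv_eq_fderiv]
  refine HasLineDerivAt.lineDeriv ?_
  rw [HasLineDerivAt, hline]
  have h := (hasDerivAt_flux (m := m i) (ha i).continuous (hb i).continuous
    (x i + 0)).comp_const_add (x i) 0
  rw [add_zero] at h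
  exact (h.mul_const _).mul_const _

lemma divergence_fluxField (ha : ∀ i, ContDiff ℝ 1 (a i)) (hb : ∀ i, ContDiff ℝ 1 (b i))
    (x : Ed d) :
    divergence (fluxField a b m) x = ∏ i, a i (x i) - ∏ i, b i (x i) := by
  rw [divergence_eq_sum_fderiv ((contDiff_fluxField ha hb).differentiable one_ne_zero x)]
  simp_rw [fderiv_fluxField_apply_single ha hb]
  have := Finset.prod_sub_ordered Finset.univ (fun i => a i (x i)) fun i => a i (x i) - b i (x i)
  simp only [sub_sub_cancel, Finset.filter_gt_eq_Iio, Finset.filter_lt_eq_Ioi] at this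
  rw [this]
  ring

lemma fluxField_eq_zero (ha : ∀ i, IsUnitBump (a i) (m i) (M i))
    (hb : ∀ i, IsUnitBump (b i) (m i) (M i)) {y : Ed d} (hy : y ∉ openBox m M) :
    fluxField a b m y = 0 := by
  obtain ⟨j, hj⟩ : ∃ j, y j ∉ Ioo (m j) (M j) := by simpa using hy
  ext i
  rcases lt_trichotomy j i with hji | rfl | hij
  · simp [fluxField, Finset.prod_eq_zero (f := fun j => b j (y j)) (Finset.mem_Iio.2 hji)
      ((hb j).eq_zero hj)]
  · simp [fluxField, flux_eq_zero (ha j) (hb j) hj]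
  · simp [fluxField, Finset.prod_eq_zero (f := fun j => a j (y j)) (Finset.mem_Ioi.2 hij)
      ((ha j).eq_zero hj)]

lemma tsupport_fluxField_subset (ha : ∀ i, IsUnitBump (a i) (m i) (M i))
    (hb : ∀ i, IsUnitBump (b i) (m i) (M i)) : tsupport (fluxField a b m) ⊆ box m M :=
  closure_minimal (fun _ hy => openBox_subset_box m M
    (by_contra fun h => hy (fluxField_eq_zero ha hb h))) (isCompact_box m M).isClosed

lemma norm_fluxField_le (ha : ∀ i, IsUnitBump (a i) (m i) (M i))
    (hb : ∀ i, IsUnitBump (b i) (m i) (M i)) {C : ℝ} (hC : 0 ≤ C) (haC : ∀ i t, a i t ≤ C)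
    (hbC : ∀ i t, b i t ≤ C) (y : Ed d) : ‖fluxField a b m y‖ ≤ √d * C ^ (d - 1) := by
  refine norm_le_sqrt_mul_of_forall_abs_le (by positivity) fun i => ?_
  have hb0 : 0 ≤ ∏ j ∈ Finset.Iio i, b j (y j) := Finset.prod_nonneg fun j _ => (hb j).nonneg _
  have ha0 : 0 ≤ ∏ j ∈ Finset.Ioi i, a j (y j) := Finset.prod_nonneg fun j _ => (ha j).nonneg _
  have hbC' : ∏ j ∈ Finset.Iio i, b j (y j) ≤ C ^ (i : ℕ) := by
    simpa using Finset.prod_le_prod (s := Finset.Iio i) (fun j _ => (hb j).nonneg _)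
      fun j _ => hbC j (y j)
  have haC' : ∏ j ∈ Finset.Ioi i, a j (y j) ≤ C ^ (d - 1 - i) := by
    simpa using Finset.prod_le_prod (s := Finset.Ioi i) (fun j _ => (ha j).nonneg _)
      fun j _ => haC j (y j)
  calc |fluxField a b m y i|
      = |flux (a i) (b i) (m i) (y i)| * (∏ j ∈ Finset.Iio i, b j (y j)) *
          ∏ j ∈ Finset.Ioi i, a j (y j) := by
        simp only [fluxField, PiLp.toLp_apply, abs_mul, abs_of_nonneg ha0, abs_of_nonneg hb0]
    _ ≤ 1 * C ^ (i : ℕ) * C ^ (d - 1 - i) := by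
        gcongr
        exact abs_flux_le_one (ha i) (hb i) _
    _ = C ^ (d - 1) := by
        rw [one_mul, ← pow_add]
        congr 1
        omega

lemma integral_mul_prod_sub_prod_le (ha : ∀ i, IsUnitBump (a i) (m i) (M i))
    (hb : ∀ i, IsUnitBump (b i) (m i) (M i)) {C : ℝ} (hC : 0 ≤ C) (haC : ∀ i t, a i t ≤ C)
    (hbC : ∀ i t, b i t ≤ C) {Ω : Set (Ed d)} (hΩ : box m M ⊆ Ω) {f : Ed d → ℝ}
    (hvar : var Ω f ≠ ∞) :
    ∫ x, f x * (∏ i, a i (x i) - ∏ i, b i (x i)) ≤ √d * C ^ (d - 1) * (var Ω f).toReal := by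
  have ha' : ∀ i, ContDiff ℝ 1 (a i) := fun i => (ha i).contDiff
  have hb' : ∀ i, ContDiff ℝ 1 (b i) := fun i => (hb i).contDiff
  calc ∫ x, f x * (∏ i, a i (x i) - ∏ i, b i (x i))
      = ∫ x in Ω, f x * divergence (fluxField a b m) x := by
        simp_rw [divergence_fluxField ha' hb']
        refine (setIntegral_eq_integral_of_forall_compl_eq_zero fun x hx => ?_).symm
        have hx' : x ∉ openBox m M := fun h => hx (hΩ (openBox_subset_box m M h))
        rw [IsUnitBump.prod_eq_zero ha hx', IsUnitBump.prod_eq_zero hb hx', sub_self, mul_zero]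
    _ ≤ √d * C ^ (d - 1) * (var Ω f).toReal :=
        integral_mul_divergence_le (contDiff_fluxField ha' hb')
          ((isCompact_box m M).of_isClosed_subset (isClosed_tsupport _)
            (tsupport_fluxField_subset ha hb))
          ((tsupport_fluxField_subset ha hb).trans hΩ) (norm_fluxField_le ha hb hC haC hbC) hvar

end FluxField


section SetIntegral

variable {α : Type*} [MeasurableSpace α] {μ : Measure α} {f g : α → ℝ} {c : ℝ}

lemma mul_setIntegral_le_setIntegral_mul {S R : Set α} (hS : MeasurableSet S)
    (hR : MeasurableSet R) (hSR : S ⊆ R) (hf : IntegrableOn f R μ)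
    (hfg : IntegrableOn (fun x => f x * g x) R μ) (hf0 : ∀ x ∈ R, 0 ≤ f x)
    (hg0 : ∀ x ∈ R, 0 ≤ g x) (hcg : ∀ x ∈ S, c ≤ g x) :
    c * ∫ x in S, f x ∂μ ≤ ∫ x in R, f x * g x ∂μ :=
  calc c * ∫ x in S, f x ∂μ = ∫ x in S, f x * c ∂μ := by rw [integral_mul_const, mul_comm]
    _ ≤ ∫ x in S, f x * g x ∂μ :=
        setIntegral_mono_on ((hf.mono_set hSR).mul_const _) (hfg.mono_set hSR) hS fun x hx =>
          mul_le_mul_of_nonneg_left (hcg x hx) (hf0 x (hSR hx))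
    _ ≤ ∫ x in R, f x * g x ∂μ :=
        setIntegral_mono_set hfg (ae_restrict_of_forall_mem hR fun x hx =>
          mul_nonneg (hf0 x hx) (hg0 x hx)) hSR.eventuallyLE

lemma setIntegral_mul_le_mul_setIntegral {T R : Set α} (hT : MeasurableSet T) (hTR : T ⊆ R)
    (hf : IntegrableOn f T μ) (hfg : IntegrableOn (fun x => f x * g x) R μ)
    (hf0 : ∀ x ∈ T, 0 ≤ f x) (hgc : ∀ x ∈ T, g x ≤ c) (hg : ∀ x ∉ T, g x = 0) :
    ∫ x in R, f x * g x ∂μ ≤ c * ∫ x in T, f x ∂μ := by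
  have hfg0 : ∀ x ∉ T, f x * g x = 0 := fun x hx => by rw [hg x hx, mul_zero]
  calc ∫ x in R, f x * g x ∂μ = ∫ x in T, f x * g x ∂μ := by
        rw [setIntegral_eq_integral_of_forall_compl_eq_zero fun x hx => hfg0 x fun h => hx (hTR h),
          setIntegral_eq_integral_of_forall_compl_eq_zero hfg0]
    _ ≤ ∫ x in T, f x * c ∂μ :=
        setIntegral_mono_on (hfg.mono_set hTR) (hf.mul_const _) hT fun x hx =>
          mul_le_mul_of_nonneg_left (hgc x hx) (hf0 x hx)
    _ = c * ∫ x in T, f x ∂μ := by rw [integral_mul_const, mul_comm]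

end SetIntegral

lemma inv_pow_mul_setIntegral_inner_box_le {d : ℕ} {A P : Fin d → ℝ} {L l δ : ℝ} (hl : 0 < l)
    (hδ : 0 < δ) (hδl : δ ≤ l / 4) (hPA : box P (fun i => P i + l) ⊆ box A (fun i => A i + L))
    {Ω : Set (Ed d)} (hΩ : openBox A (fun i => A i + L) ⊆ Ω) {f : Ed d → ℝ}
    (hf : IntegrableOn f (box A (fun i => A i + L)))
    (hf0 : ∀ x ∈ box A (fun i => A i + L), 0 ≤ f x) (hvar : var Ω f ≠ ∞) :
    (L ^ d)⁻¹ * ∫ x in box (fun i => A i + δ) (fun i => A i + L - δ), f x ≤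
      √d * (2 / l) ^ (d - 1) * (var Ω f).toReal +
        (2 / l) ^ d * ∫ x in box P (fun i => P i + l), f x := by
  set R := box A (fun i => A i + L)
  set K := box (fun i => A i + δ / 2) (fun i => A i + L - δ / 2)
  obtain ⟨hAP, hPA'⟩ := (box_subset_box_iff fun i => by simp only; linarith).1 hPA
  have hcoord : ∀ i, A i ≤ P i ∧ P i + l ≤ A i + L := fun i => ⟨hAP i, hPA' i⟩
  -- stated per coordinate: for `d = 0` nothing relates `l` and `L`
  have hlL : ∀ i : Fin d, l ≤ L := fun i => by linarith [hcoord i]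
  have hSR : box (fun i => A i + δ) (fun i => A i + L - δ) ⊆ R :=
    box_subset_box (fun i => by linarith) fun i => by linarith
  have hKR : K ⊆ R := box_subset_box (fun i => by linarith) fun i => by linarith
  have hKΩ : K ⊆ Ω :=
    (box_subset_openBox (fun i => by linarith) fun i => by linarith).trans hΩ
  choose a haK haC haS using fun i => exists_isUnitBump (A i) L δ hδ (by linarith [hlL i])
  choose b hb hbC _ using fun i => exists_isUnitBump (P i) l δ hδ hδl
  have hbK : ∀ i, IsUnitBump (b i) (A i + δ / 2) (A i + L - δ / 2) := fun i =>
    (hb i).mono (by linarith [hcoord i]) (by linarith [hcoord i])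
  have hbP : ∀ i, IsUnitBump (b i) (P i) (P i + l) := fun i =>
    (hb i).mono (by linarith) (by linarith)
  have haC' : ∀ i t, a i t ≤ 2 / l := fun i t =>
    (haC i t).trans (div_le_div_of_nonneg_left zero_le_two hl (hlL i))
  set Pa : Ed d → ℝ := fun x => ∏ i, a i (x i)
  set Pb : Ed d → ℝ := fun x => ∏ i, b i (x i)
  have hfPa : IntegrableOn (fun x => f x * Pa x) R :=
    IntegrableOn.mul_prod_box hf fun i => (haK i).continuous
  have hfPb : IntegrableOn (fun x => f x * Pb x) R :=
    IntegrableOn.mul_prod_box hf fun i => (hb i).continuous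
  have hlower := mul_setIntegral_le_setIntegral_mul (measurableSet_box _ _) (measurableSet_box _ _)
    hSR hf hfPa hf0 (fun x _ => Finset.prod_nonneg fun i _ => (haK i).nonneg _) fun x hx =>
      calc (L ^ d)⁻¹ = ∏ _i : Fin d, 1 / L := by simp
        _ ≤ Pa x := Finset.prod_le_prod (fun i _ => (one_div_pos.2 (hl.trans_le (hlL i))).le)
            fun i _ => haS i _ (mem_box.1 hx i)
  have hupper := setIntegral_mul_le_mul_setIntegral (measurableSet_box _ _) hPA (hf.mono_set hPA)
    hfPb (fun x hx => hf0 x (hPA hx))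
    (fun x _ => (Finset.prod_le_prod (fun i _ => (hb i).nonneg _) fun i _ => hbC i _).trans_eq
      (by rw [Finset.prod_const, Finset.card_univ, Fintype.card_fin]))
    fun x hx => IsUnitBump.prod_eq_zero hbP fun h => hx (openBox_subset_box _ _ h)
  have hflux := integral_mul_prod_sub_prod_le haK hbK (by positivity) haC' hbC hKΩ hvar
  have hsplit : (∫ x in R, f x * Pa x) - ∫ x in R, f x * Pb x = ∫ x, f x * (Pa x - Pb x) := by
    rw [← integral_sub hfPa hfPb]
    simp_rw [← mul_sub]
    refine setIntegral_eq_integral_of_forall_compl_eq_zero fun x hx => ?_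
    have hx' : x ∉ openBox (fun i => A i + δ / 2) (fun i => A i + L - δ / 2) := fun h =>
      hx (hKR (openBox_subset_box _ _ h))
    simp only [Pa, Pb, IsUnitBump.prod_eq_zero haK hx', IsUnitBump.prod_eq_zero hbK hx',
      sub_self, mul_zero]
  linarith

lemma setAverage_le_of_box_subset {d : ℕ} {A P : Fin d → ℝ} {L l : ℝ} (hL : 0 < L) (hl : 0 < l)
    (hPA : box P (fun i => P i + l) ⊆ box A (fun i => A i + L))
    {Ω : Set (Ed d)} (hΩ : openBox A (fun i => A i + L) ⊆ Ω) {f : Ed d → ℝ}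
    (hf : IntegrableOn f (box A (fun i => A i + L)))
    (hf0 : ∀ x ∈ box A (fun i => A i + L), 0 ≤ f x) (hvar : var Ω f ≠ ∞) :
    ⨍ x in box A (fun i => A i + L), f x ≤
      √d * (2 / l) ^ (d - 1) * (var Ω f).toReal +
        (2 / l) ^ d * ∫ x in box P (fun i => P i + l), f x := by
  set δ : ℕ → ℝ := fun k => l / 4 / (k + 1)
  have hδ0 : ∀ k, 0 < δ k := fun k => by positivity
  have hδlim : Tendsto δ atTop (𝓝 0) := by
    simpa [δ, div_eq_mul_inv] using tendsto_one_div_add_atTop_nhds_zero_nat.const_mul (l / 4)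
  set S : ℕ → Set (Ed d) := fun k => box (fun i => A i + δ k) (fun i => A i + L - δ k)
  have hSmono : Monotone S := fun j k hjk => by
    have : δ k ≤ δ j := div_le_div_of_nonneg_left (by positivity) (by positivity)
      (by simpa using hjk)
    exact box_subset_box (fun i => by linarith) fun i => by linarith
  have hSunion : ⋃ k, S k = openBox A (fun i => A i + L) := iUnion_box_eq_openBox hδ0 hδlim
  have hlim : Tendsto (fun k => ∫ x in S k, f x) atTop
      (𝓝 (∫ x in box A (fun i => A i + L), f x)) := by
    rw [← setIntegral_congr_set (openBox_ae_eq_box _ _), ← hSunion]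
    exact tendsto_setIntegral_of_monotone (fun k => measurableSet_box _ _) hSmono
      (hSunion ▸ hf.mono_set (openBox_subset_box _ _))
  have hvol : volume.real (box A (fun i => A i + L)) = L ^ d := by
    simp [Measure.real, volume_box, hL.le]
  rw [setAverage_eq, hvol, smul_eq_mul]
  exact le_of_tendsto' (hlim.const_mul _) fun k => inv_pow_mul_setIntegral_inner_box_le hl
    (hδ0 k) (div_le_self (by positivity) (by simp)) hPA hΩ hf hf0 hvar

theorem limsup_average_lt_top_general {d : ℕ}
    (Q : ℕ → Set (Ed d)) (hQ : ∀ n, IsCube (Q n)) (hmono : ∀ n, Q n ⊆ Q (n + 1))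
    (f : Ed d → ℝ) (hpos : ∀ x ∈ ⋃ n, Q n, 0 ≤ f x)
    (hint : ∀ n, IntegrableOn f (Q n) volume)
    (hvar : var (interior (⋃ n, Q n)) f < ∞) :
    Filter.limsup (fun n => ENNReal.ofReal (⨍ z in Q n, f z)) Filter.atTop < ∞ := by
  choose A L hL hQA using fun n => (hQ n).exists_eq_box
  have havg : ∀ n, ⨍ z in Q n, f z ≤
      √d * (2 / L 0) ^ (d - 1) * (var (interior (⋃ n, Q n)) f).toReal +
        (2 / L 0) ^ d * ∫ x in Q 0, f x := fun n => by
    rw [hQA 0, hQA n]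
    refine setAverage_le_of_box_subset (hL n) (hL 0) ?_ ?_ ?_ ?_ hvar.ne
    · rw [← hQA 0, ← hQA n]
      exact monotone_nat_of_le_succ hmono (Nat.zero_le n)
    · exact (isOpen_openBox _ _).subset_interior_iff.2
        ((openBox_subset_box _ _).trans (hQA n ▸ subset_iUnion Q n))
    · exact hQA n ▸ hint n
    · exact fun x hx => hpos x (mem_iUnion.2 ⟨n, hQA n ▸ hx⟩)
  exact (limsup_le_of_le (by isBoundedDefault)
    (.of_forall fun n => ENNReal.ofReal_le_ofReal (havg n))).trans_lt ENNReal.ofReal_lt_top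

/-- For an increasing sequence of cubes `Q₁ ⊆ Q₂ ⊆ …` with union `Q_∞` and a nonnegative
`f` on `Q_∞`, integrable on each `Qₙ`, with `∫_{Q₁} f < ∞` and `var_{int Q_∞} f < ∞`,
the averages `f_{Qₙ}` have finite `limsup`. -/
theorem limsup_average_lt_top {d : ℕ} (hd : 1 ≤ d)
    (Q : ℕ → Set (Ed d)) (hQ : ∀ n, IsCube (Q n)) (hmono : ∀ n, Q n ⊆ Q (n + 1))
    (f : Ed d → ℝ) (hmeas : Measurable f) (hpos : ∀ x ∈ ⋃ n, Q n, 0 ≤ f x)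
    (hint : ∀ n, IntegrableOn f (Q n) volume)
    (hint1 : ∫⁻ x in Q 0, ENNReal.ofReal (f x) < ∞)
    (hvar : var (interior (⋃ n, Q n)) f < ∞) :
    Filter.limsup (fun n => ENNReal.ofReal (⨍ z in Q n, f z)) Filter.atTop < ∞ :=
  limsup_average_lt_top_general Q hQ hmono f hpos hint hvar

end
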